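/- (Legendre) Let a, n be real numbers with n/2 < a < n. Then (∫_0^∞ z^{n−a−1} (1 + z^n)^{−1/2} dz) · (∫_0^1 x^{a−1} (1 − x^n)^{−1/2} dx) = 2π / (n·(2a − n)·sin(πa/n)). -/

import Mathlib

/-!
Substituting `t = z ^ n` and `t = x ^ n` turns the two integrals into `1 / n` times the Beta
integrals `B(1 - a/n, a/n - 1/2)` (of the second kind, over `(0, ∞)`) and `B(a/n, 1/2)`. In the
product of the Gamma quotients, `Γ(1/2)` cancels and `Γ(a/n + 1/2) = (a/n - 1/2) Γ(a/n - 1/2)`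
leaves `Γ(a/n) Γ(1 - a/n) / (a/n - 1/2)`, which the reflection formula evaluates.
-/

open MeasureTheory Real Set ProbabilityTheory

theorem integral_rpow_mul_one_sub_rpow_eq_beta {u v : ℝ} (hu : 0 < u) (hv : 0 < v) :
    ∫ x in (0:ℝ)..1, x ^ (u - 1) * (1 - x) ^ (v - 1) = beta u v := by
  rw [beta_eq_betaIntegralReal u v hu hv, Complex.betaIntegral,
    ← Complex.ofReal_re (∫ x in (0:ℝ)..1, _), ← intervalIntegral.integral_ofReal]
  congr 1
  refine intervalIntegral.integral_congr fun x ⟨hx0, hx1⟩ => ?_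
  simp only [zero_le_one, inf_of_le_left, sup_of_le_right] at hx0 hx1
  rw [Complex.ofReal_mul, Complex.ofReal_cpow hx0, Complex.ofReal_cpow (sub_nonneg.2 hx1)]
  push_cast
  rfl

lemma image_div_one_sub_Ioo_zero_one : (fun x : ℝ => x / (1 - x)) '' Ioo 0 1 = Ioi 0 := by
  ext y
  constructor
  · rintro ⟨x, ⟨hx0, hx1⟩, rfl⟩
    exact div_pos hx0 (sub_pos.2 hx1)
  · intro (hy : 0 < y)
    refine ⟨y / (1 + y), ⟨by positivity, (div_lt_one (by positivity)).2 (by linarith)⟩, ?_⟩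
    field_simp
    ring

lemma injOn_div_one_sub_Ioo_zero_one : InjOn (fun x : ℝ => x / (1 - x)) (Ioo 0 1) := by
  intro x ⟨_, hx1⟩ y ⟨_, hy1⟩ hxy
  have : 1 - x ≠ 0 := by linarith
  have : 1 - y ≠ 0 := by linarith
  field_simp at hxy
  linarith

theorem integral_Ioi_rpow_mul_one_add_rpow_eq_beta {u v : ℝ} (hu : 0 < u) (hv : 0 < v) :
    ∫ t in Ioi (0:ℝ), t ^ (u - 1) * (1 + t) ^ (-(u + v)) = beta u v := by
  have hderiv : ∀ x ∈ Ioo (0:ℝ) 1,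
      HasDerivWithinAt (fun x => x / (1 - x)) (1 / (1 - x) ^ 2) (Ioo 0 1) x := by
    intro x ⟨_, hx1⟩
    have := (hasDerivAt_id x).div ((hasDerivAt_id x).const_sub 1) (by simp; linarith)
    exact (this.congr_deriv (by simp)).hasDerivWithinAt
  rw [← image_div_one_sub_Ioo_zero_one,
    integral_image_eq_integral_abs_deriv_smul measurableSet_Ioo hderiv
      injOn_div_one_sub_Ioo_zero_one, ← integral_rpow_mul_one_sub_rpow_eq_beta hu hv,
    intervalIntegral.integral_of_le zero_le_one, integral_Ioc_eq_integral_Ioo]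
  refine setIntegral_congr_fun measurableSet_Ioo fun x ⟨hx0, hx1⟩ => ?_
  have hy : 0 < 1 - x := sub_pos.2 hx1
  have h1 : 1 + x / (1 - x) = (1 - x)⁻¹ := by field_simp; ring
  rw [smul_eq_mul, h1, div_rpow hx0.le hy.le, inv_rpow hy.le, rpow_neg hy.le, inv_inv,
    abs_of_pos (by positivity), show u + v = (u - 1) + (v - 1) + 2 by ring,
    rpow_add hy, rpow_add hy, rpow_two]
  field_simp

theorem integral_comp_rpow_Ioo_zero_one {E : Type*} [NormedAddCommGroup E] [NormedSpace ℝ E]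
    {g : ℝ → E} {p : ℝ} (hp : 0 < p) :
    ∫ x in Ioo 0 1, (p * x ^ (p - 1)) • g (x ^ p) = ∫ y in Ioo 0 1, g y := by
  have hmono : StrictMonoOn (· ^ p) (Icc (0:ℝ) 1) :=
    (strictMonoOn_rpow_Ici_of_exponent_pos hp).mono Icc_subset_Ici_self
  have himage : (· ^ p) '' Ioo 0 1 = Ioo (0:ℝ) 1 := by
    rw [(continuous_rpow_const hp.le).continuousOn.image_Ioo_of_strictMonoOn zero_le_one hmono]
    simp [zero_rpow hp.ne']
  conv_rhs => rw [← himage]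
  rw [integral_image_eq_integral_abs_deriv_smul measurableSet_Ioo
    (fun x hx => (hasDerivAt_rpow_const (Or.inl hx.1.ne')).hasDerivWithinAt)
    (hmono.injOn.mono Ioo_subset_Icc_self)]
  refine setIntegral_congr_fun measurableSet_Ioo fun x ⟨hx0, _⟩ => ?_
  rw [abs_of_pos (by positivity)]

lemma rpow_sub_one_mul_rpow_rpow_sub_one {x : ℝ} (hx : 0 < x) (p u : ℝ) :
    x ^ (p - 1) * (x ^ p) ^ (u - 1) = x ^ (p * u - 1) := by
  rw [← rpow_mul hx.le, ← rpow_add hx]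
  ring_nf

theorem integral_Ioi_rpow_mul_one_add_rpow_rpow_eq_beta {p u v : ℝ} (hp : 0 < p) (hu : 0 < u)
    (hv : 0 < v) :
    ∫ z in Ioi (0:ℝ), z ^ (p * u - 1) * (1 + z ^ p) ^ (-(u + v)) = beta u v / p := by
  rw [eq_div_iff hp.ne', ← integral_Ioi_rpow_mul_one_add_rpow_eq_beta hu hv,
    ← integral_comp_rpow_Ioi_of_pos (g := fun t => t ^ (u - 1) * (1 + t) ^ (-(u + v))) hp,
    ← integral_mul_const]
  refine setIntegral_congr_fun measurableSet_Ioi fun x (hx : 0 < x) => ?_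
  rw [smul_eq_mul, ← rpow_sub_one_mul_rpow_rpow_sub_one hx]
  ring

theorem integral_rpow_mul_one_sub_rpow_rpow_eq_beta {p u v : ℝ} (hp : 0 < p) (hu : 0 < u)
    (hv : 0 < v) :
    ∫ x in (0:ℝ)..1, x ^ (p * u - 1) * (1 - x ^ p) ^ (v - 1) = beta u v / p := by
  rw [eq_div_iff hp.ne', ← integral_rpow_mul_one_sub_rpow_eq_beta hu hv,
    intervalIntegral.integral_of_le zero_le_one, intervalIntegral.integral_of_le zero_le_one,
    integral_Ioc_eq_integral_Ioo, integral_Ioc_eq_integral_Ioo,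
    ← integral_comp_rpow_Ioo_zero_one (g := fun t => t ^ (u - 1) * (1 - t) ^ (v - 1)) hp,
    ← integral_mul_const]
  refine setIntegral_congr_fun measurableSet_Ioo fun x ⟨hx, _⟩ => ?_
  rw [smul_eq_mul, ← rpow_sub_one_mul_rpow_rpow_sub_one hx]
  ring

theorem beta_mul_beta_eq_pi_div_sin {s : ℝ} (hs : 1 / 2 < s) :
    beta (1 - s) (s - 1 / 2) * beta s (1 / 2) = π / ((s - 1 / 2) * sin (π * s)) := by
  have hGamma : Gamma (s + 1 / 2) = (s - 1 / 2) * Gamma (s - 1 / 2) := by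
    rw [← Gamma_add_one (by linarith)]
    ring_nf
  have hG := Gamma_pos_of_pos (show 0 < s - 1 / 2 by linarith)
  have := Gamma_pos_of_pos one_half_pos
  calc beta (1 - s) (s - 1 / 2) * beta s (1 / 2)
      = Gamma s * Gamma (1 - s) / (s - 1 / 2) := by
        rw [beta, beta, show 1 - s + (s - 1 / 2) = 1 / 2 by ring, hGamma]
        generalize Gamma (s - 1 / 2) = G at hG ⊢
        field_simp
    _ = π / ((s - 1 / 2) * sin (π * s)) := by
        rw [Gamma_mul_Gamma_one_sub, div_div, mul_comm]

theorem legendre_z2 (a n : ℝ) (h1 : n / 2 < a) (h2 : a < n) :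
    (∫ z in Set.Ioi (0:ℝ), z ^ (n - a - 1) * (1 + z ^ n) ^ (-(1:ℝ)/2)) *
      (∫ x in (0:ℝ)..1, x ^ (a - 1) * (1 - x ^ n) ^ (-(1:ℝ)/2)) =
      2 * Real.pi / (n * (2 * a - n) * Real.sin (Real.pi * a / n)) := by
  have hn : 0 < n := by linarith
  obtain ⟨s, rfl⟩ : ∃ s, a = n * s := ⟨a / n, by field_simp⟩
  have hs_half : 1 / 2 < s := by nlinarith
  have hs_one : s < 1 := by nlinarith
  have hI : ∫ z in Ioi (0:ℝ), z ^ (n - n * s - 1) * (1 + z ^ n) ^ (-(1:ℝ)/2) =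
      beta (1 - s) (s - 1 / 2) / n := by
    rw [← integral_Ioi_rpow_mul_one_add_rpow_rpow_eq_beta hn (by linarith) (by linarith)]
    congr! 4 <;> ring
  have hJ : ∫ x in (0:ℝ)..1, x ^ (n * s - 1) * (1 - x ^ n) ^ (-(1:ℝ)/2) =
      beta s (1 / 2) / n := by
    rw [← integral_rpow_mul_one_sub_rpow_rpow_eq_beta hn (by linarith) one_half_pos]
    congr! 4; ring
  rw [hI, hJ, div_mul_div_comm, beta_mul_beta_eq_pi_div_sin hs_half,
    show π * (n * s) / n = π * s by field_simp]
  have := sin_pos_of_pos_of_lt_pi (x := π * s) (by positivity) (by nlinarith [pi_pos])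
  field_simp
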